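/- arXiv:math/0109210 — 3 statements merged into one kernel-verified Lean document; each statement's English description precedes it below -/
import Mathlib

section
/- Let d, q₁, q₂, q₃ be positive integers such that gcd(q₁,q₂,q₃) = 1, gcd(q_a,q_b) divides d for every pair a < b, and for each j ∈ {1,2,3} either q_j divides d or there exists i ≠ j with q_j ∣ d − q_i. For each j set ε_j = 0 if q_j ∣ d and ε_j = 1 otherwise; for each pair a < b set g_{ab} = gcd(q_a,q_b) and m_{ab} = (d − ε_b·q_a − ε_a·q_b)/lcm(q_a,q_b) ∈ ℚ; and set E = d(d − q₁ − q₂ − q₃)/(q₁q₂q₃) + Σ_{a<b} m_{ab}/g_{ab} + Σ_j ε_j/q_j ∈ ℚ. Then for every positive integer k the following identity holds in ℚ: E·d·[d ∣ k] + Σ_{j : q_j ∣ d} (d/q_j)·[(d/q_j) ∣ k] − 1 − Σ_{a<b} m_{ab}·(d/g_{ab})·[(d/g_{ab}) ∣ k] = ∏_{j=1}^{3} ( (d/q_j)·[d ∣ k·q_j] − 1 ). -/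
lemma aux_div_dvd {g d k : ℕ} (hg : 0 < g) (hgd : g ∣ d) : (d / g ∣ k ↔ d ∣ k * g) := by
  obtain ⟨e, rfl⟩ := hgd
  rw [Nat.mul_div_cancel_left _ hg, mul_comm k g]
  exact (Nat.mul_dvd_mul_iff_left hg).symm

lemma aux_witness {d qj qi k : ℕ} (h : (qj:ℤ) ∣ (d:ℤ) - qi) (hkj : d ∣ k * qj) :
    d ∣ k * qi := by
  obtain ⟨t, ht⟩ := h
  have h2 : (d:ℤ) ∣ (k:ℤ) * qj := by exact_mod_cast hkj
  have h3 : (d:ℤ) ∣ (k:ℤ) * qi := by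
    have e : (k:ℤ) * qi = k * d - (k * qj) * t := by linear_combination (-(k:ℤ)) * ht
    rw [e]
    exact dvd_sub (dvd_mul_left (d:ℤ) (k:ℤ)) (h2.mul_right t)
  exact_mod_cast h3

lemma aux_pair {d qa qb k : ℕ} (hab : Nat.gcd qa qb ∣ d) (ha : 0 < qa) :
    (d / Nat.gcd qa qb ∣ k ↔ (d ∣ k * qa ∧ d ∣ k * qb)) := by
  have hg : 0 < Nat.gcd qa qb := Nat.gcd_pos_of_pos_left _ ha
  rw [aux_div_dvd hg hab]
  constructor
  · intro h
    exact ⟨h.trans (Nat.mul_dvd_mul_left k (Nat.gcd_dvd_left _ _)),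
           h.trans (Nat.mul_dvd_mul_left k (Nat.gcd_dvd_right _ _))⟩
  · rintro ⟨h1, h2⟩
    have := Nat.dvd_gcd h1 h2
    rwa [Nat.gcd_mul_left] at this

lemma aux_all {d q₁ q₂ q₃ k : ℕ} (hgcd : Nat.gcd q₁ (Nat.gcd q₂ q₃) = 1) :
    (d ∣ k ↔ (d ∣ k * q₁ ∧ d ∣ k * q₂ ∧ d ∣ k * q₃)) := by
  constructor
  · intro h
    exact ⟨h.trans (dvd_mul_right k q₁), h.trans (dvd_mul_right k q₂),
      h.trans (dvd_mul_right k q₃)⟩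
  · rintro ⟨h1, h2, h3⟩
    have := Nat.dvd_gcd h1 (Nat.dvd_gcd h2 h3)
    rwa [Nat.gcd_mul_left, Nat.gcd_mul_left, hgcd, mul_one] at this

/-- The arithmetic core of Theorem 1: with `d, q₁, q₂, q₃` positive integers such that
`gcd(q₁,q₂,q₃) = 1`, each pairwise gcd divides `d`, and each `qⱼ` divides `d` or
`d - qᵢ` for some `i ≠ j`; with `εⱼ = [¬ qⱼ ∣ d]`, `g_{ab} = gcd(q_a,q_b)`,
`m_{ab} = (d - ε_b q_a - ε_a q_b)/lcm(q_a,q_b)`, and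
`E = d(d-q₁-q₂-q₃)/(q₁q₂q₃) + Σ_{a<b} m_{ab}/g_{ab} + Σⱼ εⱼ/qⱼ`,
one has, for every `k ≥ 1`,
`E·d·[d∣k] + Σ_{qⱼ∣d} (d/qⱼ)·[(d/qⱼ)∣k] - 1 - Σ_{a<b} m_{ab}·(d/g_{ab})·[(d/g_{ab})∣k]
  = ∏ⱼ ((d/qⱼ)·[d ∣ k·qⱼ] - 1)` in `ℚ`. -/
theorem power_sums_of_dual_phiA_eq_monodromy_power_sums
    (d q₁ q₂ q₃ : ℕ) (hd : 0 < d) (h₁ : 0 < q₁) (h₂ : 0 < q₂) (h₃ : 0 < q₃)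
    (hgcd : Nat.gcd q₁ (Nat.gcd q₂ q₃) = 1)
    (h₁₂ : Nat.gcd q₁ q₂ ∣ d) (h₁₃ : Nat.gcd q₁ q₃ ∣ d) (h₂₃ : Nat.gcd q₂ q₃ ∣ d)
    (hq₁ : q₁ ∣ d ∨ (q₁ : ℤ) ∣ (d : ℤ) - q₂ ∨ (q₁ : ℤ) ∣ (d : ℤ) - q₃)
    (hq₂ : q₂ ∣ d ∨ (q₂ : ℤ) ∣ (d : ℤ) - q₁ ∨ (q₂ : ℤ) ∣ (d : ℤ) - q₃)
    (hq₃ : q₃ ∣ d ∨ (q₃ : ℤ) ∣ (d : ℤ) - q₁ ∨ (q₃ : ℤ) ∣ (d : ℤ) - q₂)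
    (ε₁ ε₂ ε₃ : ℚ)
    (hε₁ : ε₁ = if q₁ ∣ d then 0 else 1)
    (hε₂ : ε₂ = if q₂ ∣ d then 0 else 1)
    (hε₃ : ε₃ = if q₃ ∣ d then 0 else 1)
    (m₁₂ m₁₃ m₂₃ : ℚ)
    (hm₁₂ : m₁₂ = ((d : ℚ) - ε₂ * q₁ - ε₁ * q₂) / (Nat.lcm q₁ q₂ : ℚ))
    (hm₁₃ : m₁₃ = ((d : ℚ) - ε₃ * q₁ - ε₁ * q₃) / (Nat.lcm q₁ q₃ : ℚ))
    (hm₂₃ : m₂₃ = ((d : ℚ) - ε₃ * q₂ - ε₂ * q₃) / (Nat.lcm q₂ q₃ : ℚ))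
    (E : ℚ)
    (hE : E = (d : ℚ) * ((d : ℚ) - q₁ - q₂ - q₃) / ((q₁ : ℚ) * q₂ * q₃)
            + (m₁₂ / (Nat.gcd q₁ q₂ : ℚ) + m₁₃ / (Nat.gcd q₁ q₃ : ℚ)
                + m₂₃ / (Nat.gcd q₂ q₃ : ℚ))
            + (ε₁ / q₁ + ε₂ / q₂ + ε₃ / q₃)) :
    ∀ k : ℕ, 0 < k →
      E * d * (if d ∣ k then (1 : ℚ) else 0)
        + ((if q₁ ∣ d then ((d : ℚ) / q₁) * (if d / q₁ ∣ k then 1 else 0) else 0)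
          + (if q₂ ∣ d then ((d : ℚ) / q₂) * (if d / q₂ ∣ k then 1 else 0) else 0)
          + (if q₃ ∣ d then ((d : ℚ) / q₃) * (if d / q₃ ∣ k then 1 else 0) else 0))
        - 1
        - (m₁₂ * ((d : ℚ) / (Nat.gcd q₁ q₂ : ℚ))
              * (if d / Nat.gcd q₁ q₂ ∣ k then 1 else 0)
          + m₁₃ * ((d : ℚ) / (Nat.gcd q₁ q₃ : ℚ))
              * (if d / Nat.gcd q₁ q₃ ∣ k then 1 else 0)
          + m₂₃ * ((d : ℚ) / (Nat.gcd q₂ q₃ : ℚ))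
              * (if d / Nat.gcd q₂ q₃ ∣ k then 1 else 0))
      = ((d : ℚ) / q₁ * (if d ∣ k * q₁ then 1 else 0) - 1)
          * ((d : ℚ) / q₂ * (if d ∣ k * q₂ then 1 else 0) - 1)
          * ((d : ℚ) / q₃ * (if d ∣ k * q₃ then 1 else 0) - 1) := by
  intro k hk
  have hQ1 : (q₁:ℚ) ≠ 0 := Nat.cast_ne_zero.mpr h₁.ne'
  have hQ2 : (q₂:ℚ) ≠ 0 := Nat.cast_ne_zero.mpr h₂.ne'
  have hQ3 : (q₃:ℚ) ≠ 0 := Nat.cast_ne_zero.mpr h₃.ne'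
  have hG12 : (Nat.gcd q₁ q₂ : ℚ) ≠ 0 :=
    Nat.cast_ne_zero.mpr (Nat.gcd_pos_of_pos_left _ h₁).ne'
  have hG13 : (Nat.gcd q₁ q₃ : ℚ) ≠ 0 :=
    Nat.cast_ne_zero.mpr (Nat.gcd_pos_of_pos_left _ h₁).ne'
  have hG23 : (Nat.gcd q₂ q₃ : ℚ) ≠ 0 :=
    Nat.cast_ne_zero.mpr (Nat.gcd_pos_of_pos_left _ h₂).ne'
  have hgl12 : (Nat.gcd q₁ q₂ : ℚ) * (Nat.lcm q₁ q₂ : ℚ) = (q₁:ℚ) * q₂ := by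
    exact_mod_cast congrArg (Nat.cast : ℕ → ℚ) (Nat.gcd_mul_lcm q₁ q₂)
  have hgl13 : (Nat.gcd q₁ q₃ : ℚ) * (Nat.lcm q₁ q₃ : ℚ) = (q₁:ℚ) * q₃ := by
    exact_mod_cast congrArg (Nat.cast : ℕ → ℚ) (Nat.gcd_mul_lcm q₁ q₃)
  have hgl23 : (Nat.gcd q₂ q₃ : ℚ) * (Nat.lcm q₂ q₃ : ℚ) = (q₂:ℚ) * q₃ := by
    exact_mod_cast congrArg (Nat.cast : ℕ → ℚ) (Nat.gcd_mul_lcm q₂ q₃)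
  have hMg12 : m₁₂ / (Nat.gcd q₁ q₂ : ℚ) = (d:ℚ)/((q₁:ℚ)*q₂) - ε₂/q₂ - ε₁/q₁ := by
    rw [hm₁₂, div_div, mul_comm ((Nat.lcm q₁ q₂ : ℚ)) _, hgl12]
    field_simp
  have hMg13 : m₁₃ / (Nat.gcd q₁ q₃ : ℚ) = (d:ℚ)/((q₁:ℚ)*q₃) - ε₃/q₃ - ε₁/q₁ := by
    rw [hm₁₃, div_div, mul_comm ((Nat.lcm q₁ q₃ : ℚ)) _, hgl13]
    field_simp
  have hMg23 : m₂₃ / (Nat.gcd q₂ q₃ : ℚ) = (d:ℚ)/((q₂:ℚ)*q₃) - ε₃/q₃ - ε₂/q₂ := by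
    rw [hm₂₃, div_div, mul_comm ((Nat.lcm q₂ q₃ : ℚ)) _, hgl23]
    field_simp
  have hM12 : m₁₂ * ((d:ℚ) / (Nat.gcd q₁ q₂ : ℚ))
      = (d:ℚ)*d/((q₁:ℚ)*q₂) - ε₂*d/q₂ - ε₁*d/q₁ := by
    rw [show m₁₂ * ((d:ℚ) / (Nat.gcd q₁ q₂ : ℚ))
        = m₁₂ / (Nat.gcd q₁ q₂ : ℚ) * d by ring, hMg12]
    ring
  have hM13 : m₁₃ * ((d:ℚ) / (Nat.gcd q₁ q₃ : ℚ))
      = (d:ℚ)*d/((q₁:ℚ)*q₃) - ε₃*d/q₃ - ε₁*d/q₁ := by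
    rw [show m₁₃ * ((d:ℚ) / (Nat.gcd q₁ q₃ : ℚ))
        = m₁₃ / (Nat.gcd q₁ q₃ : ℚ) * d by ring, hMg13]
    ring
  have hM23 : m₂₃ * ((d:ℚ) / (Nat.gcd q₂ q₃ : ℚ))
      = (d:ℚ)*d/((q₂:ℚ)*q₃) - ε₃*d/q₃ - ε₂*d/q₂ := by
    rw [show m₂₃ * ((d:ℚ) / (Nat.gcd q₂ q₃ : ℚ))
        = m₂₃ / (Nat.gcd q₂ q₃ : ℚ) * d by ring, hMg23]
    ring
  have hEd : E * d = (d:ℚ)*d*d/((q₁:ℚ)*q₂*q₃) - ε₁*d/q₁ - ε₂*d/q₂ - ε₃*d/q₃ := by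
    rw [hE, hMg12, hMg13, hMg23]
    field_simp
    ring
  have eD : (if d ∣ k then (1:ℚ) else 0)
      = (if d ∣ k*q₁ then (1:ℚ) else 0) * (if d ∣ k*q₂ then (1:ℚ) else 0)
        * (if d ∣ k*q₃ then (1:ℚ) else 0) := by
    by_cases h1 : d ∣ k*q₁ <;> by_cases h2 : d ∣ k*q₂ <;> by_cases h3 : d ∣ k*q₃ <;>
      simp [aux_all hgcd (d := d) (k := k), h1, h2, h3]
  have e12 : (if d / Nat.gcd q₁ q₂ ∣ k then (1:ℚ) else 0)
      = (if d ∣ k*q₁ then (1:ℚ) else 0) * (if d ∣ k*q₂ then (1:ℚ) else 0) := by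
    by_cases h1 : d ∣ k*q₁ <;> by_cases h2 : d ∣ k*q₂ <;>
      simp [aux_pair h₁₂ h₁ (k := k), h1, h2]
  have e13 : (if d / Nat.gcd q₁ q₃ ∣ k then (1:ℚ) else 0)
      = (if d ∣ k*q₁ then (1:ℚ) else 0) * (if d ∣ k*q₃ then (1:ℚ) else 0) := by
    by_cases h1 : d ∣ k*q₁ <;> by_cases h3 : d ∣ k*q₃ <;>
      simp [aux_pair h₁₃ h₁ (k := k), h1, h3]
  have e23 : (if d / Nat.gcd q₂ q₃ ∣ k then (1:ℚ) else 0)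
      = (if d ∣ k*q₂ then (1:ℚ) else 0) * (if d ∣ k*q₃ then (1:ℚ) else 0) := by
    by_cases h2 : d ∣ k*q₂ <;> by_cases h3 : d ∣ k*q₃ <;>
      simp [aux_pair h₂₃ h₂ (k := k), h2, h3]
  have eT1 : (if q₁ ∣ d then ((d:ℚ)/q₁) * (if d / q₁ ∣ k then (1:ℚ) else 0) else 0)
      = (1 - ε₁) * ((d:ℚ)/q₁) * (if d ∣ k*q₁ then (1:ℚ) else 0) := by
    by_cases hqd : q₁ ∣ d
    · have hε : ε₁ = 0 := by rw [hε₁, if_pos hqd]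
      rw [if_pos hqd, hε]
      by_cases h1 : d ∣ k*q₁ <;> simp [aux_div_dvd h₁ hqd (k := k), h1]
    · have hε : ε₁ = 1 := by rw [hε₁, if_neg hqd]
      rw [if_neg hqd, hε]
      ring
  have eT2 : (if q₂ ∣ d then ((d:ℚ)/q₂) * (if d / q₂ ∣ k then (1:ℚ) else 0) else 0)
      = (1 - ε₂) * ((d:ℚ)/q₂) * (if d ∣ k*q₂ then (1:ℚ) else 0) := by
    by_cases hqd : q₂ ∣ d
    · have hε : ε₂ = 0 := by rw [hε₂, if_pos hqd]
      rw [if_pos hqd, hε]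
      by_cases h2 : d ∣ k*q₂ <;> simp [aux_div_dvd h₂ hqd (k := k), h2]
    · have hε : ε₂ = 1 := by rw [hε₂, if_neg hqd]
      rw [if_neg hqd, hε]
      ring
  have eT3 : (if q₃ ∣ d then ((d:ℚ)/q₃) * (if d / q₃ ∣ k then (1:ℚ) else 0) else 0)
      = (1 - ε₃) * ((d:ℚ)/q₃) * (if d ∣ k*q₃ then (1:ℚ) else 0) := by
    by_cases hqd : q₃ ∣ d
    · have hε : ε₃ = 0 := by rw [hε₃, if_pos hqd]
      rw [if_pos hqd, hε]
      by_cases h3 : d ∣ k*q₃ <;> simp [aux_div_dvd h₃ hqd (k := k), h3]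
    · have hε : ε₃ = 1 := by rw [hε₃, if_neg hqd]
      rw [if_neg hqd, hε]
      ring
  rw [eD, eT1, eT2, eT3, e12, e13, e23]
  by_cases h1 : d ∣ k * q₁
  · by_cases h2 : d ∣ k * q₂
    · by_cases h3 : d ∣ k * q₃
      · simp only [if_pos h1, if_pos h2, if_pos h3]
        linear_combination hEd - hM12 - hM13 - hM23
      · simp only [if_pos h1, if_pos h2, if_neg h3]
        linear_combination -hM12
    · by_cases h3 : d ∣ k * q₃
      · simp only [if_pos h1, if_neg h2, if_pos h3]
        linear_combination -hM13
      · simp only [if_pos h1, if_neg h2, if_neg h3]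
        have hqd : q₁ ∣ d := by
          rcases hq₁ with h | h | h
          · exact h
          · exact absurd (aux_witness h h1) h2
          · exact absurd (aux_witness h h1) h3
        have hε : ε₁ = 0 := by rw [hε₁, if_pos hqd]
        linear_combination (-(d:ℚ)/q₁) * hε
  · by_cases h2 : d ∣ k * q₂
    · by_cases h3 : d ∣ k * q₃
      · simp only [if_neg h1, if_pos h2, if_pos h3]
        linear_combination -hM23
      · simp only [if_neg h1, if_pos h2, if_neg h3]
        have hqd : q₂ ∣ d := by
          rcases hq₂ with h | h | h
          · exact h
          · exact absurd (aux_witness h h2) h1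
          · exact absurd (aux_witness h h2) h3
        have hε : ε₂ = 0 := by rw [hε₂, if_pos hqd]
        linear_combination (-(d:ℚ)/q₂) * hε
    · by_cases h3 : d ∣ k * q₃
      · simp only [if_neg h1, if_neg h2, if_pos h3]
        have hqd : q₃ ∣ d := by
          rcases hq₃ with h | h | h
          · exact h
          · exact absurd (aux_witness h h3) h1
          · exact absurd (aux_witness h h3) h2
        have hε : ε₃ = 0 := by rw [hε₃, if_pos hqd]
        linear_combination (-(d:ℚ)/q₃) * hε
      · simp only [if_neg h1, if_neg h2, if_neg h3]
        ring
end

section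
/- Let d, q₁, q₂, q₃ be positive integers, let k be an integer, and let ζ = exp(2π√(−1)·k/d) ∈ ℂ. Then, as T tends to ζ within the set {T ∈ ℂ : T^{q_j} ≠ 1 for j = 1,2,3}, the function Φ(T) = T^{−d}·∏_{j=1}^{3} (T^d − T^{q_j})/(T^{q_j} − 1) tends to ∏_{j=1}^{3} ( (d/q_j)·[d ∣ k·q_j] − 1 ), where [P] denotes 1 if the proposition P holds and 0 otherwise. -/
/-!
Each factor `(T^d - T^q)/(T^q - 1)` equals `(T^d - 1)/(T^q - 1) - 1`. Since `ζ^d = 1`, this is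
continuous at `ζ` with value `-1` when `ζ^q ≠ 1`; when `ζ^q = 1` both `T^d - 1` and `T^q - 1`
vanish at `ζ`, and the quotient of their derivatives `(d/ζ)/(q/ζ) = d/q` gives the limit.
Finally `ζ^q = 1` exactly when `d ∣ kq`, and `T^(-d) → ζ^(-d) = 1`.
-/

open Filter Topology Complex

section

variable {𝕜 : Type*} [NontriviallyNormedField 𝕜]

theorem tendsto_div_nhdsNE_of_hasDerivAt {f g : 𝕜 → 𝕜} {a b x : 𝕜}
    (hf : HasDerivAt f a x) (hg : HasDerivAt g b x) (hfx : f x = 0) (hgx : g x = 0)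
    (hb : b ≠ 0) : Tendsto (fun y => f y / g y) (𝓝[≠] x) (𝓝 (a / b)) := by
  refine ((hasDerivAt_iff_tendsto_slope.mp hf).div (hasDerivAt_iff_tendsto_slope.mp hg)
    hb).congr' ?_
  filter_upwards [self_mem_nhdsWithin] with y (hy : y ≠ x)
  rw [Pi.div_apply, slope_def_field, slope_def_field, hfx, hgx, sub_zero, sub_zero,
    div_div_div_cancel_right₀ (sub_ne_zero.mpr hy)]

theorem hasDerivAt_pow_of_pow_eq_one {ζ : 𝕜} {n : ℕ} (h : ζ ^ n = 1) :
    HasDerivAt (fun T => T ^ n) (n * ζ⁻¹) ζ := by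
  convert hasDerivAt_pow n ζ using 1
  rcases Nat.eq_zero_or_pos n with rfl | hn
  · simp
  · rw [inv_eq_of_mul_eq_one_right (by rw [mul_pow_sub_one hn.ne', h])]

variable [CharZero 𝕜]

open scoped Classical in
theorem tendsto_pow_sub_pow_div_pow_sub_one {ζ : 𝕜} {d q : ℕ} (hζd : ζ ^ d = 1) (hq : q ≠ 0) :
    Tendsto (fun T => (T ^ d - T ^ q) / (T ^ q - 1)) (𝓝[{T | T ^ q ≠ 1}] ζ)
      (𝓝 ((d : 𝕜) / q * (if ζ ^ q = 1 then 1 else 0) - 1)) := by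
  have hsplit : (fun T : 𝕜 => (T ^ d - T ^ q) / (T ^ q - 1)) =ᶠ[𝓝[{T | T ^ q ≠ 1}] ζ]
      fun T => (T ^ d - 1) / (T ^ q - 1) - 1 := by
    filter_upwards [self_mem_nhdsWithin] with T (hT : T ^ q ≠ 1)
    rw [div_sub_one (sub_ne_zero.mpr hT), sub_sub_sub_cancel_right]
  refine Tendsto.congr' hsplit.symm (Tendsto.sub_const ?_ 1)
  split_ifs with hζq
  · have hζ : ζ ≠ 0 := by
      rintro rfl
      simp [zero_pow hq] at hζq
    have hle : 𝓝[{T : 𝕜 | T ^ q ≠ 1}] ζ ≤ 𝓝[≠] ζ :=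
      nhdsWithin_mono ζ fun T hT (hTζ : T = ζ) => hT (hTζ ▸ hζq)
    have hlim := tendsto_div_nhdsNE_of_hasDerivAt
      ((hasDerivAt_pow_of_pow_eq_one hζd).sub_const 1)
      ((hasDerivAt_pow_of_pow_eq_one hζq).sub_const 1)
      (sub_eq_zero.mpr hζd) (sub_eq_zero.mpr hζq)
      (mul_ne_zero (Nat.cast_ne_zero.mpr hq) (inv_ne_zero hζ))
    rw [mul_div_mul_right _ _ (inv_ne_zero hζ)] at hlim
    simpa using hlim.mono_left hle
  · have hcont : ContinuousAt (fun T : 𝕜 => (T ^ d - 1) / (T ^ q - 1)) ζ := by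
      fun_prop (disch := exact sub_ne_zero.mpr hζq)
    simpa [hζd] using hcont.continuousWithinAt.tendsto

end

theorem exp_two_pi_mul_I_int_div_pow_eq_one_iff {d : ℕ} (hd : d ≠ 0) (k : ℤ) (q : ℕ) :
    exp (2 * Real.pi * I * k / d) ^ q = 1 ↔ (d : ℤ) ∣ k * q := by
  have hexp : exp (2 * Real.pi * I * k / d) = exp (2 * Real.pi * I / d) ^ k := by
    rw [← exp_int_mul]
    ring_nf
  rw [hexp, ← zpow_natCast, ← zpow_mul]
  exact (isPrimitiveRoot_exp d hd).zpow_eq_one_iff_dvd _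

/-- Milnor–Orlik formula: for positive integers `d, q₁, q₂, q₃`, an integer `k`, and
`ζ = exp(2π√-1·k/d)`, the function
`Φ(T) = T^(-d) · ∏ⱼ (T^d - T^(qⱼ))/(T^(qⱼ) - 1)` tends, as `T → ζ` within
`{T : ℂ | T^(qⱼ) ≠ 1 for j = 1,2,3}`, to `∏ⱼ ((d/qⱼ)·[d ∣ k·qⱼ] - 1)`. -/
theorem milnor_orlik_limit (d q₁ q₂ q₃ : ℕ) (hd : 0 < d)
    (h₁ : 0 < q₁) (h₂ : 0 < q₂) (h₃ : 0 < q₃) (k : ℤ)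
    (ζ : ℂ) (hζ : ζ = Complex.exp (2 * Real.pi * Complex.I * k / d)) :
    Tendsto
      (fun T : ℂ => T ^ (-(d : ℤ)) *
        ((T ^ d - T ^ q₁) / (T ^ q₁ - 1) * ((T ^ d - T ^ q₂) / (T ^ q₂ - 1) *
          ((T ^ d - T ^ q₃) / (T ^ q₃ - 1)))))
      (nhdsWithin ζ {T : ℂ | T ^ q₁ ≠ 1 ∧ T ^ q₂ ≠ 1 ∧ T ^ q₃ ≠ 1})
      (nhds
        (((d : ℂ) / q₁ * (if (d : ℤ) ∣ k * q₁ then 1 else 0) - 1) *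
          (((d : ℂ) / q₂ * (if (d : ℤ) ∣ k * q₂ then 1 else 0) - 1) *
            ((d : ℂ) / q₃ * (if (d : ℤ) ∣ k * q₃ then 1 else 0) - 1)))) := by
  have hroot (q : ℕ) : ζ ^ q = 1 ↔ (d : ℤ) ∣ k * q :=
    hζ ▸ exp_two_pi_mul_I_int_div_pow_eq_one_iff hd.ne' k q
  have hζd : ζ ^ d = 1 := (hroot d).mpr (dvd_mul_left _ _)
  have hζ0 : ζ ≠ 0 := by
    rintro rfl
    simp [zero_pow hd.ne'] at hζd
  set s := {T : ℂ | T ^ q₁ ≠ 1 ∧ T ^ q₂ ≠ 1 ∧ T ^ q₃ ≠ 1}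
  have hfactor {q : ℕ} (hq : 0 < q) (hs : s ⊆ {T | T ^ q ≠ 1}) :
      Tendsto (fun T : ℂ => (T ^ d - T ^ q) / (T ^ q - 1)) (𝓝[s] ζ)
        (𝓝 ((d : ℂ) / q * (if (d : ℤ) ∣ k * q then 1 else 0) - 1)) := by
    simpa only [hroot] using
      (tendsto_pow_sub_pow_div_pow_sub_one hζd hq.ne').mono_left (nhdsWithin_mono ζ hs)
  have hzpow : Tendsto (fun T : ℂ => T ^ (-(d : ℤ))) (𝓝 ζ) (𝓝 1) := by
    simpa [hζd] using (continuousAt_zpow₀ ζ (-(d : ℤ)) (Or.inl hζ0)).tendsto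
  simpa using (hzpow.mono_left nhdsWithin_le_nhds).mul
    ((hfactor h₁ fun _ hT => hT.1).mul ((hfactor h₂ fun _ hT => hT.2.1).mul
      (hfactor h₃ fun _ hT => hT.2.2)))
end

section
/- Let K be a field, N ≥ 1, B an N×N matrix over K, and v : ℕ → K^N a sequence with B·v₀ = v₁ and B·v_m = v_{m+1} + v_{m−1} for all m ≥ 1. Let M(t) = (1+t²)·I − t·B, an N×N matrix over the polynomial ring K[t], fix an index j₀, and let M₀(t) be the matrix obtained from M(t) by replacing its j₀-th column by the constant vector v₀. Then det M(t) · Σ_{m≥0} v_m(j₀) t^m = det M₀(t) in the formal power series ring K⟦t⟧. -/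
/-!
The generating vector `F(t) = Σ v_m t^m` solves `M(t) F(t) = v₀` in `K⟦t⟧^N`: comparing
coefficients, this linear system is exactly the recurrence `B v_m = v_{m+1} + v_{m-1}` together
with `B v₀ = v₁`. Cramer's rule over the commutative ring `K⟦t⟧` then gives
`det M · F_{j₀} = det M₀`.
-/

open Polynomial PowerSeries Matrix

section

variable {n R : Type*} [Fintype n] [CommRing R]

theorem Matrix.det_mul_eq_det_updateCol_of_mulVec_eq [DecidableEq n] {A : Matrix n n R}
    {x b : n → R} (hx : A *ᵥ x = b) (j : n) :
    A.det * x j = (A.updateCol j b).det := by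
  rw [← hx, ← cramer_apply, cramer_eq_adjugate_mulVec, mulVec_mulVec, adjugate_mul, smul_mulVec,
    one_mulVec, Pi.smul_apply, smul_eq_mul]

theorem Polynomial.coe_det [DecidableEq n] (A : Matrix n n R[X]) :
    (A.det : R⟦X⟧) = (A.map ((↑) : R[X] → R⟦X⟧)).det :=
  coeToPowerSeries.ringHom.map_det A

theorem PowerSeries.one_add_X_sq_mul_mk_sub_X_mul_mk (a b : ℕ → R)
    (h0 : b 0 = a 1) (h : ∀ m, b (m + 1) = a (m + 2) + a m) :
    (1 + X ^ 2) * mk a - X * mk b = C (a 0) := by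
  ext (_ | _ | m)
  · simp
  · simp [h0, add_mul, coeff_X_pow_mul']
  · simp [h, add_mul, coeff_X_pow_mul']

theorem Matrix.map_C_mulVec_mk (B : Matrix n n R) (v : ℕ → n → R) :
    B.map PowerSeries.C *ᵥ (fun i => mk fun m => v m i) = fun i => mk fun m => (B *ᵥ v m) i := by
  ext i m
  simp [mulVec, dotProduct, map_sum, PowerSeries.coeff_C_mul]

theorem Matrix.one_add_X_sq_smul_one_sub_X_smul_mulVec_mk [DecidableEq n] (B : Matrix n n R)
    (v : ℕ → n → R) (h0 : B *ᵥ v 0 = v 1) (h : ∀ m, B *ᵥ v (m + 1) = v (m + 2) + v m) :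
    ((1 + PowerSeries.X ^ 2 : R⟦X⟧) • (1 : Matrix n n R⟦X⟧)
        - (PowerSeries.X : R⟦X⟧) • B.map PowerSeries.C) *ᵥ (fun i => mk fun m => v m i)
      = fun i => PowerSeries.C (v 0 i) := by
  rw [sub_mulVec, smul_mulVec, smul_mulVec, one_mulVec, map_C_mulVec_mk]
  ext i : 1
  exact one_add_X_sq_mul_mk_sub_X_mul_mk (fun m => v m i) (fun m => (B *ᵥ v m) i)
    (congrFun h0 i) fun m => congrFun (h m) i

end

theorem cramer_generating_series_general
    (K : Type*) [Field K] (N : ℕ)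
    (B : Matrix (Fin N) (Fin N) K) (v : ℕ → Fin N → K)
    (h0 : B.mulVec (v 0) = v 1)
    (h : ∀ m : ℕ, 1 ≤ m → B.mulVec (v m) = v (m + 1) + v (m - 1))
    (j₀ : Fin N)
    (M M₀ : Matrix (Fin N) (Fin N) K[X])
    (hM : M = (1 + (Polynomial.X : K[X]) ^ 2) • (1 : Matrix (Fin N) (Fin N) K[X])
        - (Polynomial.X : K[X]) • B.map (Polynomial.C : K →+* K[X]).toFun)
    (hM₀ : M₀ = M.updateCol j₀ fun i => Polynomial.C (v 0 i)) :
    (M.det : PowerSeries K) * PowerSeries.mk (fun m => v m j₀)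
      = (M₀.det : PowerSeries K) := by
  have hrec (m : ℕ) : B *ᵥ v (m + 1) = v (m + 2) + v m := by simpa using h (m + 1) m.succ_pos
  have hM_coe : M.map ((↑) : K[X] → K⟦X⟧)
      = (1 + PowerSeries.X ^ 2 : K⟦X⟧) • 1 - (PowerSeries.X : K⟦X⟧) • B.map PowerSeries.C := by
    ext i j : 1
    subst hM
    by_cases hij : i = j <;> simp [one_apply, hij] <;> exact mul_comm _ _
  rw [coe_det, coe_det, hM₀, map_updateCol, hM_coe]
  convert det_mul_eq_det_updateCol_of_mulVec_eq
    (one_add_X_sq_smul_one_sub_X_smul_mulVec_mk B v h0 hrec) j₀ using 3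
  ext i : 1
  exact coe_C _

/-- Cramer's rule step in the McKay-correspondence proof: with `M(t) = (1+t²)I - tB`
over `K[t]`, `M₀(t)` obtained from `M(t)` by replacing column `j₀` by the constant
vector `v₀`, and `v : ℕ → K^N` satisfying `B·v₀ = v₁`, `B·v_m = v_{m+1} + v_{m-1}`
for `m ≥ 1`, one has `det M(t) · Σ_m v_m(j₀) t^m = det M₀(t)` in `K⟦t⟧`. -/
theorem cramer_generating_series
    (K : Type*) [Field K] (N : ℕ) (hN : 1 ≤ N)
    (B : Matrix (Fin N) (Fin N) K) (v : ℕ → Fin N → K)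
    (h0 : B.mulVec (v 0) = v 1)
    (h : ∀ m : ℕ, 1 ≤ m → B.mulVec (v m) = v (m + 1) + v (m - 1))
    (j₀ : Fin N)
    (M M₀ : Matrix (Fin N) (Fin N) K[X])
    (hM : M = (1 + (Polynomial.X : K[X]) ^ 2) • (1 : Matrix (Fin N) (Fin N) K[X])
        - (Polynomial.X : K[X]) • B.map (Polynomial.C : K →+* K[X]).toFun)
    (hM₀ : M₀ = M.updateCol j₀ fun i => Polynomial.C (v 0 i)) :
    (M.det : PowerSeries K) * PowerSeries.mk (fun m => v m j₀)
      = (M₀.det : PowerSeries K) :=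
  cramer_generating_series_general K N B v h0 h j₀ M M₀ hM hM₀
end
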